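/- Let R ⊆ A^q be a submodule and 0 ≤ d ≤ n. The following are equivalent: (1) A^q/R is finitely generated as a module over A_d; (2) for every 1 ≤ i ≤ n−d there exist a positive integer L_i and elements a_{i,0},…,a_{i,L_i−1} ∈ A_d with a_{i,0} a unit of A_d such that the polynomial p_i := σ_{d+i}^{L_i} + a_{i,L_i−1}σ_{d+i}^{L_i−1} + ⋯ + a_{i,1}σ_{d+i} + a_{i,0} belongs to ann(A^q/R); (3) for every 1 ≤ i ≤ n−d there exists a polynomial p_i of the same form (with a_{i,j} ∈ A_d and a_{i,0} a unit of A_d) such that p_i·e_j ∈ R for every standard basis row vector e_j of A^q, 1 ≤ j ≤ q. -/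

import Mathlib

set_option synthInstance.maxHeartbeats 1000000
set_option maxHeartbeats 1000000

noncomputable section

/-- The Laurent polynomial ring `A = ℝ[σ₁^{±1},…,σₙ^{±1}]` in `n` indeterminates,
realized as the group algebra of `ℤⁿ` over `ℝ`. -/
abbrev LP (n : ℕ) : Type := AddMonoidAlgebra ℝ (Fin n → ℤ)

/-- The monomial `σ^ν` for `ν ∈ ℤⁿ`. -/
def mono {n : ℕ} (ν : Fin n → ℤ) : LP n := AddMonoidAlgebra.single ν 1

/-- The Laurent polynomial subring `A_d = ℝ[σ₁^{±1},…,σ_d^{±1}]` in the first `d`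
indeterminates, as a subalgebra of `A`: it is generated by the monomials `σ^ν`
with `ν` supported on the first `d` coordinates. -/
def subA (n d : ℕ) : Subalgebra ℝ (LP n) :=
  Algebra.adjoin ℝ {x | ∃ ν : Fin n → ℤ, (∀ i : Fin n, d ≤ (i : ℕ) → ν i = 0) ∧ x = mono ν}

/-- The index of the variable `σ_{d+j}` for `1 ≤ j ≤ n-d` (0-indexed: `j : Fin (n-d)`). -/
def embIdx {n : ℕ} (d : ℕ) (j : Fin (n - d)) : Fin n :=
  ⟨d + (j : ℕ), by have := j.isLt; omega⟩

/-- The variable `σ_{d+j}` as an element of `A`. -/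
def sigmaVar {n : ℕ} (d : ℕ) (j : Fin (n - d)) : LP n := mono (Pi.single (embIdx d j) 1)

/-- The action of a Laurent polynomial `f ∈ A` on a scalar trajectory `w : ℤⁿ → ℝ`:
`(σ^{ν'} w)(ν) = w(ν + ν')`, extended `ℝ`-linearly. -/
def actS {n : ℕ} (f : LP n) (w : (Fin n → ℤ) → ℝ) : (Fin n → ℤ) → ℝ :=
  fun ν => Finsupp.sum f.coeff fun μ c => c * w (ν + μ)

/-- The action of a row vector `r ∈ A^q` on a vector trajectory `w : ℤⁿ → ℝ^q`:
`r·w = Σᵢ rᵢ·wᵢ`. -/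
def actRow {n q : ℕ} (r : Fin q → LP n) (w : (Fin n → ℤ) → Fin q → ℝ) : (Fin n → ℤ) → ℝ :=
  fun ν => ∑ j, actS (r j) (fun μ => w μ j) ν

/-- The componentwise action of a matrix `P ∈ A^{a×b}` on a trajectory `w : ℤⁿ → ℝ^b`. -/
def actMat {n a b : ℕ} (P : Matrix (Fin a) (Fin b) (LP n)) (w : (Fin n → ℤ) → Fin b → ℝ) :
    (Fin n → ℤ) → Fin a → ℝ :=
  fun ν i => actRow (P i) w ν

/-- The behavior of a submodule `R ⊆ A^q`:
`B(R) = {w : ℤⁿ → ℝ^q | r·w = 0 for all r ∈ R}`. -/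
def Behavior {n q : ℕ} (R : Submodule (LP n) (Fin q → LP n)) :
    Set ((Fin n → ℤ) → Fin q → ℝ) :=
  {w | ∀ r ∈ R, actRow r w = 0}

/-- A matrix `T ∈ ℤ^{n×n}` is ℤ-unimodular if `det T = ±1`. -/
def Unimodular {n : ℕ} (T : Matrix (Fin n) (Fin n) ℤ) : Prop := T.det = 1 ∨ T.det = -1

/-- The `ℝ`-algebra endomorphism `φ_T : A → A` induced by `T ∈ ℤ^{n×n}`,
determined by `φ_T(σ^ν) = σ^{Tν}`. -/
def phiT {n : ℕ} (T : Matrix (Fin n) (Fin n) ℤ) : LP n →ₐ[ℝ] LP n :=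
  AddMonoidAlgebra.mapDomainAlgHom ℝ ℝ T.mulVecLin.toAddMonoidHom

/-- The image `φ̂_T(R)` of a submodule `R ⊆ A^q` under the componentwise extension
`φ̂_T : A^q → A^q` of `φ_T` (the span is taken only to record that it is a submodule;
for unimodular `T` the image is already a submodule). -/
def hatPhiT {n q : ℕ} (T : Matrix (Fin n) (Fin n) ℤ) (R : Submodule (LP n) (Fin q → LP n)) :
    Submodule (LP n) (Fin q → LP n) :=
  Submodule.span (LP n) ((fun r (i : Fin q) => phiT T (r i)) '' (R : Set (Fin q → LP n)))

/-- The annihilator ideal `ann(A^q/R) = {f ∈ A | f·v ∈ R for all v ∈ A^q}`. -/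
def annQ {n q : ℕ} (R : Submodule (LP n) (Fin q → LP n)) : Ideal (LP n) :=
  Submodule.colon R ⊤

/-- The monomial `σ₁^{ν₁}⋯σ_d^{ν_d}` (the part of `σ^ν` in the first `d` variables),
as an element of `A_d`. -/
def monoD (n d : ℕ) (ν : Fin n → ℤ) : subA n d :=
  ⟨mono (fun i => if (i : ℕ) < d then ν i else 0),
   Algebra.subset_adjoin
     ⟨fun i => if (i : ℕ) < d then ν i else 0, fun i hi => if_neg (by omega), rfl⟩⟩

/-
If `A^q/R` is finite over `A_d`, Cayley–Hamilton gives monic annihilating polynomials over `A_d`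
for both `σ = σ_{d+i}` and `σ⁻¹`; reversing the second one and adding a high power of `σ` times
the first yields a monic polynomial in `σ` with constant term `1`. Conversely, a monic
annihilating polynomial makes `σ` integral modulo the annihilator and, when its constant term is a
unit, expresses `σ⁻¹` as a polynomial in `σ`. Since `A` is generated over `A_d` by the `σ_{d+i}^{±1}`, the quotient of `A`
by the annihilator is then a finite `A_d`-algebra, over which `A^q/R` is finitely generated.
-/

open Polynomial

section Annihilator

variable {S A M : Type*} [CommRing S] [CommRing A] [Algebra S A] [AddCommGroup M] [Module A M]
  [Module S M] [IsScalarTower S A M]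

theorem exists_pow_add_sum_mem_iff [Nontrivial S] {I : Ideal A} (x : A) :
    (∃ L : ℕ, 0 < L ∧ ∃ a : ℕ → S, IsUnit (a 0) ∧
      x ^ L + ∑ j ∈ Finset.range L, algebraMap S A (a j) * x ^ j ∈ I) ↔
    ∃ p : S[X], p.Monic ∧ 0 < p.natDegree ∧ IsUnit (p.coeff 0) ∧ aeval x p ∈ I := by
  constructor
  · rintro ⟨L, hL, a, ha, hmem⟩
    have hlt : (∑ j ∈ Finset.range L, C (a j) * X ^ j).degree < (L : WithBot ℕ) := by
      rw [← Fin.sum_univ_eq_sum_range fun j => C (a j) * X ^ j]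
      exact degree_sum_fin_lt _
    refine ⟨X ^ L + ∑ j ∈ Finset.range L, C (a j) * X ^ j, monic_X_pow_add hlt, ?_, ?_, ?_⟩
    · rwa [natDegree_add_eq_left_of_degree_lt (by rwa [degree_X_pow]), natDegree_X_pow]
    · simpa [coeff_X_pow, hL.ne, finsetSum_coeff, coeff_C_mul_X_pow, hL] using ha
    · simpa using hmem
  · rintro ⟨p, hp, hdeg, h0, hmem⟩
    refine ⟨p.natDegree, hdeg, p.coeff, h0, ?_⟩
    rw [hp.as_sum] at hmem
    simpa using hmem

theorem exists_monic_aeval_mem_annihilator [Module.Finite S M] (x : A) :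
    ∃ p : S[X], p.Monic ∧ aeval x p ∈ Module.annihilator A M := by
  obtain ⟨p, hp, hx⟩ := LinearMap.exists_monic_and_aeval_eq_zero S (Algebra.lsmul S S M x)
  refine ⟨p, hp, Module.mem_annihilator.mpr fun m => ?_⟩
  rw [aeval_algHom_apply] at hx
  exact LinearMap.congr_fun hx m

theorem aeval_reverse_mem_of_aeval_inv_mem {I : Ideal A} (u : Aˣ) {p : S[X]}
    (hp : aeval (↑u⁻¹ : A) p ∈ I) : aeval (u : A) p.reverse ∈ I := by
  have := eval₂_reverse_mul_pow (algebraMap S A) (↑u⁻¹ : A) p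
  rw [invOf_units, inv_inv, ← aeval_def, ← aeval_def] at this
  rw [← this] at hp
  simpa [mul_assoc, ← mul_pow] using I.mul_mem_right ((u : A) ^ p.natDegree) hp

theorem exists_monic_coeff_zero_eq_one_aeval_mem_annihilator [Nontrivial S] [Module.Finite S M]
    (u : Aˣ) : ∃ p : S[X], p.Monic ∧ 0 < p.natDegree ∧ p.coeff 0 = 1 ∧
      aeval (u : A) p ∈ Module.annihilator A M := by
  obtain ⟨P, hP, hPu⟩ := exists_monic_aeval_mem_annihilator (S := S) (M := M) (u : A)
  obtain ⟨Q, hQ, hQu⟩ := exists_monic_aeval_mem_annihilator (S := S) (M := M) (↑u⁻¹ : A)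
  have hdeg : (X ^ (Q.natDegree + 1) * P).natDegree = Q.natDegree + 1 + P.natDegree := by
    rw [(monic_X_pow _).natDegree_mul hP, natDegree_X_pow]
  have hlt : Q.reverse.degree < (X ^ (Q.natDegree + 1) * P).degree :=
    degree_lt_degree (by rw [hdeg]; linarith [reverse_natDegree_le Q])
  refine ⟨X ^ (Q.natDegree + 1) * P + Q.reverse, ((monic_X_pow _).mul hP).add_of_left hlt,
    ?_, ?_, ?_⟩
  · rw [natDegree_add_eq_left_of_degree_lt hlt, hdeg]
    omega
  · simp [coeff_zero_reverse, hQ.leadingCoeff]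
  · rw [map_add, map_mul, map_pow, aeval_X]
    exact Ideal.add_mem _ (Ideal.mul_mem_left _ _ hPu) (aeval_reverse_mem_of_aeval_inv_mem u hQu)

theorem exists_mul_eq_one_mem_adjoin_singleton {x : A} {p : S[X]} (h0 : IsUnit (p.coeff 0))
    (hx : aeval x p = 0) : ∃ y ∈ Algebra.adjoin S {x}, x * y = 1 := by
  obtain ⟨c, hc⟩ := h0
  refine ⟨-algebraMap S A ↑c⁻¹ * aeval x p.divX,
    Subalgebra.mul_mem _ (neg_mem (Subalgebra.algebraMap_mem _ _)) (aeval_mem_adjoin_singleton S x),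
    ?_⟩
  have hdiv := congrArg (aeval x) (divX_mul_X_add p)
  rw [hx, map_add, map_mul, aeval_X, aeval_C, ← hc] at hdiv
  have hinv : algebraMap S A ↑c⁻¹ * algebraMap S A ↑c = 1 := by
    rw [← map_mul, Units.inv_mul, map_one]
  linear_combination (-algebraMap S A ↑c⁻¹) * hdiv + hinv

theorem Module.Finite.of_finite_quotient_annihilator [Module.Finite A M]
    [Module.Finite S (A ⧸ Module.annihilator A M)] : Module.Finite S M := by
  let _ := Module.quotientAnnihilator (R := A) (M := M)
  have : IsScalarTower A (A ⧸ Module.annihilator A M) M := .of_algebraMap_smul fun _ _ => rfl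
  have : IsScalarTower S (A ⧸ Module.annihilator A M) M :=
    .of_algebraMap_smul fun s m => algebraMap_smul A s m
  have := Module.Finite.of_restrictScalars_finite A (A ⧸ Module.annihilator A M) M
  exact Module.Finite.trans (A ⧸ Module.annihilator A M) M

theorem Module.Finite.of_adjoin_units_eq_top {ι : Type*} [Finite ι] [Module.Finite A M]
    (u : ι → Aˣ) (hadj : Algebra.adjoin S (Set.range (fun i => (u i : A)) ∪
      Set.range (fun i => (((u i)⁻¹ : Aˣ) : A))) = ⊤)
    (h : ∀ i, ∃ p : S[X], p.Monic ∧ IsUnit (p.coeff 0) ∧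
      aeval (u i : A) p ∈ Module.annihilator A M) :
    Module.Finite S M := by
  let f := Ideal.Quotient.mkₐ S (Module.annihilator A M)
  have hzero {x : A} {p : S[X]} (hp : aeval x p ∈ Module.annihilator A M) :
      aeval (f x) p = 0 := by
    rwa [aeval_algHom_apply, Ideal.Quotient.mkₐ_eq_mk, Ideal.Quotient.eq_zero_iff_mem]
  have hint (i : ι) : IsIntegral S (f (u i)) :=
    let ⟨p, hp, _, hpu⟩ := h i
    ⟨p, hp, hzero hpu⟩
  have hinv (i : ι) : f ↑(u i)⁻¹ ∈ Algebra.adjoin S (Set.range fun i => f (u i)) := by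
    obtain ⟨p, _, h0, hpu⟩ := h i
    obtain ⟨y, hy, hxy⟩ := exists_mul_eq_one_mem_adjoin_singleton h0 (hzero hpu)
    have : f ↑(u i)⁻¹ = y :=
      left_inv_eq_right_inv (by rw [← map_mul, Units.inv_mul, map_one]) hxy
    exact this ▸ Algebra.adjoin_mono (Set.singleton_subset_iff.mpr (Set.mem_range_self i)) hy
  have htop : Algebra.adjoin S (Set.range fun i => f (u i)) = ⊤ := by
    rw [eq_top_iff, ← (AlgHom.range_eq_top f).mpr Ideal.Quotient.mk_surjective,
      ← Algebra.map_top, ← hadj, AlgHom.map_adjoin, Algebra.adjoin_le_iff, Set.image_union]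
    rintro _ (⟨_, ⟨i, rfl⟩, rfl⟩ | ⟨_, ⟨i, rfl⟩, rfl⟩)
    exacts [Algebra.subset_adjoin ⟨i, rfl⟩, hinv i]
  have : Module.Finite S (A ⧸ Module.annihilator A M) := by
    rw [Module.finite_def, ← Algebra.top_toSubmodule, ← htop]
    exact fg_adjoin_of_finite (Set.finite_range _) (Set.forall_mem_range.mpr hint)
  exact .of_finite_quotient_annihilator (A := A)

theorem Submodule.mem_colon_univ_iff_forall_single {ι : Type*} [Finite ι] [DecidableEq ι]
    {N : Submodule A (ι → A)} {r : A} :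
    r ∈ N.colon Set.univ ↔ ∀ k, r • (Pi.single k 1 : ι → A) ∈ N := by
  rw [← Submodule.top_coe (R := A), ← (Pi.basisFun A ι).span_eq, Submodule.colon_span,
    Submodule.mem_colon, Set.forall_mem_range]
  simp only [Pi.basisFun_apply]

end Annihilator

section Laurent

variable {n : ℕ}

theorem mono_add (ν μ : Fin n → ℤ) : mono (ν + μ) = mono ν * mono μ := by
  simp [mono, AddMonoidAlgebra.single_mul_single]

theorem mono_zero : mono (0 : Fin n → ℤ) = 1 := rfl

def monoUnit (ν : Fin n → ℤ) : (LP n)ˣ where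
  val := mono ν
  inv := mono (-ν)
  val_inv := by rw [← mono_add, add_neg_cancel, mono_zero]
  inv_val := by rw [← mono_add, neg_add_cancel, mono_zero]

def sigmaUnit (d : ℕ) (j : Fin (n - d)) : (LP n)ˣ := monoUnit (Pi.single (embIdx d j) 1)

theorem mono_mem_subA {d : ℕ} {ν : Fin n → ℤ} (hν : ∀ i : Fin n, d ≤ (i : ℕ) → ν i = 0) :
    mono ν ∈ subA n d :=
  Algebra.subset_adjoin ⟨ν, hν, rfl⟩

theorem adjoin_sigmaUnit_eq_top (d : ℕ) :
    Algebra.adjoin (subA n d)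
      (Set.range (fun j => (sigmaUnit (n := n) d j : LP n)) ∪
        Set.range (fun j => (((sigmaUnit (n := n) d j)⁻¹ : (LP n)ˣ) : LP n))) = ⊤ := by
  set T := Algebra.adjoin (subA n d)
      (Set.range (fun j => (sigmaUnit (n := n) d j : LP n)) ∪
        Set.range (fun j => (((sigmaUnit (n := n) d j)⁻¹ : (LP n)ˣ) : LP n)))
  let H : AddSubgroup (Fin n → ℤ) :=
    { carrier := {ν | mono ν ∈ T ∧ mono (-ν) ∈ T}
      zero_mem' := by simp [mono_zero, T.one_mem]
      add_mem' := fun ha hb => by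
        simp only [Set.mem_ofPred_eq, neg_add, mono_add] at *
        exact ⟨T.mul_mem ha.1 hb.1, T.mul_mem ha.2 hb.2⟩
      neg_mem' := fun ha => by simpa [and_comm] using ha }
  have hsingle (i : Fin n) : Pi.single i 1 ∈ H := by
    by_cases hi : (i : ℕ) < d
    · have hmem (c : ℤ) : mono (Pi.single i c) ∈ T :=
        T.algebraMap_mem (⟨mono (Pi.single i c), mono_mem_subA fun k hk => by
          rw [Pi.single_apply, if_neg (by rintro rfl; omega)]⟩ : subA n d)
      exact ⟨hmem 1, by rw [← Pi.single_neg]; exact hmem (-1)⟩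
    · obtain ⟨j, rfl⟩ : ∃ j : Fin (n - d), embIdx d j = i :=
        ⟨⟨i - d, by omega⟩, Fin.ext (by simp [embIdx]; omega)⟩
      exact ⟨Algebra.subset_adjoin (Or.inl ⟨j, rfl⟩), Algebra.subset_adjoin (Or.inr ⟨j, rfl⟩)⟩
  have hmono (ν : Fin n → ℤ) : mono ν ∈ T := by
    have : ν ∈ H := by
      rw [← Finset.univ_sum_single ν]
      refine H.sum_mem fun i _ => ?_
      simpa [← Pi.single_smul'] using H.zsmul_mem (hsingle i) (ν i)
    exact this.1
  refine eq_top_iff.mpr fun f _ => ?_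
  clear ‹f ∈ ⊤›
  induction f using AddMonoidAlgebra.induction_on with
  | of ν => rw [AddMonoidAlgebra.of_apply]; exact hmono ν
  | add f g hf hg => exact T.add_mem hf hg
  | smul r f hf => simpa using T.smul_mem hf (algebraMap ℝ (subA n d) r)

end Laurent

/-- Characterization of finite generation of `A^q/R` over `A_d` via
monic polynomials in each `σ_{d+i}` with unit constant coefficient. -/
theorem stmt3 (n d q : ℕ) (R : Submodule (LP n) (Fin q → LP n)) :
    (Module.Finite (subA n d) ((Fin q → LP n) ⧸ R) ↔
      (∀ i : Fin (n - d), ∃ L : ℕ, 0 < L ∧ ∃ a : ℕ → subA n d, IsUnit (a 0) ∧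
        (sigmaVar d i) ^ L + ∑ j ∈ Finset.range L, (a j : LP n) * (sigmaVar d i) ^ j
          ∈ annQ R)) ∧
    ((∀ i : Fin (n - d), ∃ L : ℕ, 0 < L ∧ ∃ a : ℕ → subA n d, IsUnit (a 0) ∧
        (sigmaVar d i) ^ L + ∑ j ∈ Finset.range L, (a j : LP n) * (sigmaVar d i) ^ j
          ∈ annQ R) ↔
      (∀ i : Fin (n - d), ∃ L : ℕ, 0 < L ∧ ∃ a : ℕ → subA n d, IsUnit (a 0) ∧
        ∀ k : Fin q,
          ((sigmaVar d i) ^ L + ∑ j ∈ Finset.range L, (a j : LP n) * (sigmaVar d i) ^ j) •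
            (Pi.single k 1 : Fin q → LP n) ∈ R)) := by
  have hann : annQ R = Module.annihilator (LP n) ((Fin q → LP n) ⧸ R) :=
    Submodule.annihilator_quotient.symm
  refine ⟨⟨fun hfin i => ?_, fun h => ?_⟩, ?_⟩
  · obtain ⟨p, hp, hdeg, h0, hpu⟩ :=
      exists_monic_coeff_zero_eq_one_aeval_mem_annihilator
        (S := subA n d) (M := (Fin q → LP n) ⧸ R) (sigmaUnit d i)
    exact (exists_pow_add_sum_mem_iff _).mpr ⟨p, hp, hdeg, h0 ▸ isUnit_one, hann ▸ hpu⟩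
  · refine .of_adjoin_units_eq_top (sigmaUnit d) (adjoin_sigmaUnit_eq_top d) fun i => ?_
    obtain ⟨p, hp, -, h0, hpu⟩ := (exists_pow_add_sum_mem_iff _).mp (h i)
    exact ⟨p, hp, h0, hann ▸ hpu⟩
  · simp only [annQ, Set.top_eq_univ, Submodule.mem_colon_univ_iff_forall_single]
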